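/- If R̂_S(w*,h*) = 0 (the source model fits the source data perfectly), then under Assumption 1 and for γ ∈ [0,γ̄], R̂_{T,γ}(w*,k*) ≤ 1 − MPA(T|S). -/

import Mathlib

open Finset

/-!
`k*` does no worse than `k̄` at margin `γ`, and the margin risk only grows with the margin, so
Assumption 1 bounds it by the `f_mp`-error of `h* ∘ w*`; a perfect source fit makes `h* ∘ w*`
agree with the source labels, turning that error into `1 − MPA(T|S)`.
-/

/-- The empirical margin risk R̂_{T,γ}(w,k), with `f i = k (w (x i))` the score vector. -/
noncomputable def marginRisk {n mT : ℕ} (t : Fin n → Fin mT) (f : Fin n → Fin mT → ℝ)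
    (γ : ℝ) : ℝ :=
  (n : ℝ)⁻¹ * ∑ i : Fin n,
    if h : ((Finset.univ : Finset (Fin mT)).erase (t i)).Nonempty then
      (if f i (t i) < γ + (((Finset.univ : Finset (Fin mT)).erase (t i)).sup' h (f i))
        then (1 : ℝ) else 0)
    else 0

lemma marginRisk_mono {n mT : ℕ} (t : Fin n → Fin mT) (f : Fin n → Fin mT → ℝ) :
    Monotone (marginRisk t f) := by
  intro γ γ' hγ
  unfold marginRisk
  gcongr with i
  split
  · split_ifs <;> linarith
  · exact le_rfl

lemma forall_not_of_inv_mul_sum_boole_eq_zero {n : ℕ} {p : Fin n → Prop} [DecidablePred p]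
    (h : (n : ℝ)⁻¹ * ∑ i, (if p i then (1 : ℝ) else 0) = 0) (i : Fin n) : ¬ p i := by
  have hn : (n : ℝ)⁻¹ ≠ 0 := inv_ne_zero (Nat.cast_ne_zero.mpr (Fin.pos i).ne')
  have hsum := (mul_eq_zero.mp h).resolve_left hn
  rw [Finset.sum_boole, Nat.cast_eq_zero, Finset.card_eq_zero, Finset.filter_eq_empty_iff] at hsum
  exact hsum (mem_univ i)

-- With `n = 0` the left side is `0` (junk `0⁻¹ = 0`), hence only an inequality.
lemma inv_mul_sum_boole_not_le {n : ℕ} (p : Fin n → Prop) [DecidablePred p] :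
    (n : ℝ)⁻¹ * ∑ i, (if ¬ p i then (1 : ℝ) else 0)
      ≤ 1 - (n : ℝ)⁻¹ * ∑ i, (if p i then (1 : ℝ) else 0) := by
  have hcompl : ∑ i, (if ¬ p i then (1 : ℝ) else 0) = n - ∑ i, (if p i then (1 : ℝ) else 0) := by
    rw [eq_sub_iff_add_eq, ← Finset.sum_add_distrib]
    simp only [ite_not]
    simp [apply_ite₂]
  rw [hcompl, mul_sub]
  gcongr
  exact inv_mul_le_one_of_le₀ le_rfl (Nat.cast_nonneg n)

theorem lemma1_perfect_source_general {X F : Type*} {n mS mT : ℕ}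
    (x : Fin n → X) (s : Fin n → Fin mS) (t : Fin n → Fin mT)
    (wstar : X → F) (hstar : F → Fin mS)
    (hRS : (n : ℝ)⁻¹ * ∑ i : Fin n,
      (if s i ≠ hstar (wstar (x i)) then (1 : ℝ) else 0) = 0)
    (fmp : Fin mS → Fin mT)
    (Ωk : Set (F → Fin mT → ℝ))
    (γbar : ℝ) (kbar : F → Fin mT → ℝ) (hkbar : kbar ∈ Ωk)
    (hassm : marginRisk t (fun i => kbar (wstar (x i))) γbar
      ≤ (n : ℝ)⁻¹ * ∑ i : Fin n,
          (if t i ≠ fmp (hstar (wstar (x i))) then (1 : ℝ) else 0))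
    (γ : ℝ) (hγ : γ ≤ γbar)
    (kstar : F → Fin mT → ℝ)
    (hmin : ∀ k ∈ Ωk, marginRisk t (fun i => kstar (wstar (x i))) γ
      ≤ marginRisk t (fun i => k (wstar (x i))) γ) :
    marginRisk t (fun i => kstar (wstar (x i))) γ
      ≤ 1 - (n : ℝ)⁻¹ * ∑ i : Fin n, (if t i = fmp (s i) then (1 : ℝ) else 0) := by
  have hs : ∀ i, s i = hstar (wstar (x i)) := fun i =>
    not_not.mp (forall_not_of_inv_mul_sum_boole_eq_zero hRS i)
  simp only [← hs] at hassm
  calc marginRisk t (fun i => kstar (wstar (x i))) γ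
      ≤ marginRisk t (fun i => kbar (wstar (x i))) γ := hmin kbar hkbar
    _ ≤ marginRisk t (fun i => kbar (wstar (x i))) γbar := marginRisk_mono _ _ hγ
    _ ≤ (n : ℝ)⁻¹ * ∑ i : Fin n, (if t i ≠ fmp (s i) then (1 : ℝ) else 0) := hassm
    _ ≤ 1 - (n : ℝ)⁻¹ * ∑ i : Fin n, (if t i = fmp (s i) then (1 : ℝ) else 0) :=
      inv_mul_sum_boole_not_le fun i => t i = fmp (s i)

/-- if R̂_S(w*,h*) = 0, then under Assumption 1 and γ ∈ [0,γ̄],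
R̂_{T,γ}(w*,k*) ≤ 1 − MPA(T|S). -/
theorem lemma1_perfect_source {X F : Type*} {n mS mT : ℕ} (hn : 0 < n)
    (x : Fin n → X) (s : Fin n → Fin mS) (t : Fin n → Fin mT)
    (wstar : X → F) (hstar : F → Fin mS)
    (hRS : (n : ℝ)⁻¹ * ∑ i : Fin n,
      (if s i ≠ hstar (wstar (x i)) then (1 : ℝ) else 0) = 0)
    (fmp : Fin mS → Fin mT)
    (hfmp : ∀ a b, ((Finset.univ.filter (fun i => s i = a ∧ t i = b)).card : ℝ)
      ≤ ((Finset.univ.filter (fun i => s i = a ∧ t i = fmp a)).card : ℝ))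
    (Ωk : Set (F → Fin mT → ℝ))
    (γbar : ℝ) (hγbar : 0 < γbar) (kbar : F → Fin mT → ℝ) (hkbar : kbar ∈ Ωk)
    (hassm : marginRisk t (fun i => kbar (wstar (x i))) γbar
      ≤ (n : ℝ)⁻¹ * ∑ i : Fin n,
          (if t i ≠ fmp (hstar (wstar (x i))) then (1 : ℝ) else 0))
    (γ : ℝ) (hγ0 : 0 ≤ γ) (hγ : γ ≤ γbar)
    (kstar : F → Fin mT → ℝ) (hkstar : kstar ∈ Ωk)
    (hmin : ∀ k ∈ Ωk, marginRisk t (fun i => kstar (wstar (x i))) γ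
      ≤ marginRisk t (fun i => k (wstar (x i))) γ) :
    marginRisk t (fun i => kstar (wstar (x i))) γ
      ≤ 1 - (n : ℝ)⁻¹ * ∑ i : Fin n, (if t i = fmp (s i) then (1 : ℝ) else 0) :=
  lemma1_perfect_source_general x s t wstar hstar hRS fmp Ωk γbar kbar hkbar hassm γ hγ kstar hmin
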